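/- arXiv:1009.0873 — 6 statements merged into one kernel-verified Lean document; each statement's English description precedes it below -/
import Mathlib

section
/- A 2×2 complex matrix C satisfies C² = I and diag(1,-1)·C > 0 (positive definite) if and only if there exist χ ∈ ℝ and ω ∈ [0,2π) such that C = [[cosh χ, (sinh χ)e^{-iω}], [-(sinh χ)e^{iω}, -cosh χ]]. -/
/-!
Write `η = diag(1, -1)` and `B(χ, ω) = η · C(χ, ω)` for the matrices of the statement.
The `B(·, ω)` form a one-parameter group of Hermitian matrices with `η B(χ, ω) η = B(-χ, ω)`,
so `C² = η B η B = B(0, ω) = 1`, and `B(χ, ω) = B(χ/2, ω)ᴴ B(χ/2, ω)` is positive definite.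

Conversely, if `C² = 1` and `H = η C` is positive definite, the diagonal entries `C₀₀`
and `-C₁₁` of `H` are positive while `C₀₀² = C₁₁²` by `C² = 1`; hence `C₁₁ = -C₀₀`,
and then `det H = 1`. A Hermitian matrix with equal positive diagonal entries `a` and
`det = a² - |b|² = 1` is `B(arsinh |b|, ω)`, where `-ω` is an argument of the off-diagonal
entry `b`.
-/

open Complex Matrix ComplexConjugate
open scoped ComplexOrder

theorem Complex.exists_eq_norm_mul_exp_neg_I_mul (z : ℂ) :
    ∃ ω : ℝ, 0 ≤ ω ∧ ω < 2 * Real.pi ∧ z = ‖z‖ * exp (-(I * ω)) := by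
  set ω := toIcoMod Real.two_pi_pos 0 (-arg z)
  set n := toIcoDiv Real.two_pi_pos 0 (-arg z)
  obtain ⟨hω0, hω2π⟩ := toIcoMod_mem_Ico' Real.two_pi_pos (-arg z)
  refine ⟨ω, hω0, hω2π, ?_⟩
  have hωn : ω = -arg z - n * (2 * Real.pi) := by
    have := self_sub_toIcoMod Real.two_pi_pos 0 (-arg z)
    rw [zsmul_eq_mul] at this
    linarith
  have hω : -(I * ω) = arg z * I + n * (2 * Real.pi * I) := by
    rw [hωn]; push_cast; ring
  have hexp : exp (-(I * ω)) = exp (arg z * I) := by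
    rw [hω, exp_periodic.int_mul]
  rw [hexp, norm_mul_exp_arg_mul_I]

noncomputable def boostMatrix (χ ω : ℝ) : Matrix (Fin 2) (Fin 2) ℂ :=
  !![(Real.cosh χ : ℂ), Real.sinh χ * exp (-(I * ω));
    Real.sinh χ * exp (I * ω), Real.cosh χ]

lemma boostMatrix_mul_boostMatrix (χ χ' ω : ℝ) :
    boostMatrix χ ω * boostMatrix χ' ω = boostMatrix (χ + χ') ω := by
  have h : exp (-(I * ω)) * exp (I * ω) = 1 := by rw [← exp_add, neg_add_cancel, exp_zero]
  ext i j
  fin_cases i <;> fin_cases j <;>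
    simp [boostMatrix, Matrix.mul_apply, Real.cosh_add, Real.sinh_add, -ofReal_cosh, -ofReal_sinh]
  · linear_combination (Real.sinh χ * Real.sinh χ' : ℂ) * h
  · ring
  · ring
  · linear_combination (Real.sinh χ * Real.sinh χ' : ℂ) * h

lemma boostMatrix_zero (ω : ℝ) : boostMatrix 0 ω = 1 := by
  ext i j; fin_cases i <;> fin_cases j <;> simp [boostMatrix]

lemma isHermitian_boostMatrix (χ ω : ℝ) : (boostMatrix χ ω).IsHermitian := by
  ext i j
  fin_cases i <;> fin_cases j <;>
    simp [boostMatrix, ← Complex.exp_conj, -ofReal_cosh, -ofReal_sinh]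

lemma isUnit_boostMatrix (χ ω : ℝ) : IsUnit (boostMatrix χ ω) :=
  IsUnit.of_mul_eq_one (boostMatrix (-χ) ω) <| by
    rw [boostMatrix_mul_boostMatrix, add_neg_cancel, boostMatrix_zero]

lemma posDef_boostMatrix (χ ω : ℝ) : (boostMatrix χ ω).PosDef := by
  have h := PosDef.conjTranspose_mul_self (boostMatrix (χ / 2) ω)
    (mulVec_injective_iff_isUnit.mpr (isUnit_boostMatrix _ _))
  rwa [(isHermitian_boostMatrix _ _).eq, boostMatrix_mul_boostMatrix, add_halves] at h

local notation "η" => Matrix.diagonal ![(1 : ℂ), -1]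

lemma diagonal_one_neg_one_mul_self : η * η = 1 := by
  rw [diagonal_mul_diagonal, ← diagonal_one]; congr; ext i; fin_cases i <;> simp

lemma diagonal_one_neg_one_mul_boostMatrix_mul_diagonal_one_neg_one (χ ω : ℝ) :
    η * boostMatrix χ ω * η = boostMatrix (-χ) ω := by
  ext i j; fin_cases i <;> fin_cases j <;> simp [boostMatrix]

lemma diagonal_one_neg_one_mul_boostMatrix (χ ω : ℝ) :
    η * boostMatrix χ ω =
      !![(Real.cosh χ : ℂ), (Real.sinh χ : ℂ) * Complex.exp (-(Complex.I * ω));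
        -((Real.sinh χ : ℂ) * Complex.exp (Complex.I * ω)), -(Real.cosh χ : ℂ)] := by
  ext i j; fin_cases i <;> fin_cases j <;> simp [boostMatrix]

lemma exists_eq_boostMatrix {H : Matrix (Fin 2) (Fin 2) ℂ} (hH : H.IsHermitian) (hpos : 0 < H 0 0)
    (hdiag : H 1 1 = H 0 0) (hdet : H.det = 1) :
    ∃ χ ω : ℝ, 0 ≤ ω ∧ ω < 2 * Real.pi ∧ H = boostMatrix χ ω := by
  obtain ⟨ω, hω0, hω2π, hb⟩ := (H 0 1).exists_eq_norm_mul_exp_neg_I_mul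
  set a := (H 0 0).re
  set β := ‖H 0 1‖
  have ha : H 0 0 = a := (conj_eq_iff_re.mp (hH.apply 0 0)).symm
  have hH10 : H 1 0 = conj (H 0 1) := (hH.apply 1 0).symm
  have hβ : a ^ 2 = 1 + β ^ 2 := by
    rw [det_fin_two, hdiag, hH10, mul_conj, normSq_eq_norm_sq, ha] at hdet
    push_cast at hdet
    exact_mod_cast (by linear_combination hdet : (a : ℂ) ^ 2 = 1 + (β : ℂ) ^ 2)
  have hcosh : Real.cosh (Real.arsinh β) = a := by
    rw [Real.cosh_arsinh, ← hβ, Real.sqrt_sq (pos_iff.mp hpos).1.le]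
  refine ⟨Real.arsinh β, ω, hω0, hω2π, ?_⟩
  rw [eta_fin_two H, boostMatrix, hH10, hdiag, hb, ha, hcosh, Real.sinh_arsinh]
  simp [← Complex.exp_conj]

section
variable {C : Matrix (Fin 2) (Fin 2) ℂ}

lemma apply_one_one_eq_neg_of_mul_self_eq_one (hC : C * C = 1) (hH : (η * C).PosDef) :
    C 1 1 = -C 0 0 := by
  have h00 : 0 < C 0 0 := by simpa using hH.diag_pos (i := 0)
  have h11 : 0 < -C 1 1 := by simpa using hH.diag_pos (i := 1)
  have e00 : C 0 0 * C 0 0 + C 0 1 * C 1 0 = 1 := by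
    simpa [mul_apply] using congrFun₂ hC 0 0
  have e11 : C 1 0 * C 0 1 + C 1 1 * C 1 1 = 1 := by
    simpa [mul_apply] using congrFun₂ hC 1 1
  have hprod : (C 0 0 - C 1 1) * (C 0 0 + C 1 1) = 0 := by linear_combination e00 - e11
  have hsum := (mul_eq_zero.mp hprod).resolve_left
    (sub_eq_add_neg _ (C 1 1) ▸ (add_pos h00 h11).ne')
  linear_combination hsum

lemma det_diagonal_one_neg_one_mul_eq_one (hC : C * C = 1) (h11 : C 1 1 = -C 0 0) :
    (η * C).det = 1 := by
  have e00 : C 0 0 * C 0 0 + C 0 1 * C 1 0 = 1 := by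
    simpa [mul_apply] using congrFun₂ hC 0 0
  simp only [det_fin_two, diagonal_mul, h11, cons_val_zero, cons_val_one, cons_val_fin_one]
  linear_combination e00

end

/-- A 2×2 complex matrix `C` satisfies `C² = I` and `diag(1,-1)·C > 0`
(positive definite) iff `C = [[cosh χ, sinh χ e^{-iω}], [-sinh χ e^{iω}, -cosh χ]]`
for some `χ ∈ ℝ`, `ω ∈ [0, 2π)`. -/
theorem stmt0 (C : Matrix (Fin 2) (Fin 2) ℂ) :
    (C * C = 1 ∧ (Matrix.diagonal ![1, -1] * C).PosDef) ↔
      ∃ (χ ω : ℝ), 0 ≤ ω ∧ ω < 2 * Real.pi ∧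
        C = !![(Real.cosh χ : ℂ), (Real.sinh χ : ℂ) * Complex.exp (-(Complex.I * ω));
               -((Real.sinh χ : ℂ) * Complex.exp (Complex.I * ω)), -(Real.cosh χ : ℂ)] := by
  constructor
  · rintro ⟨hC, hH⟩
    have h11 := apply_one_one_eq_neg_of_mul_self_eq_one hC hH
    have hdiag : (η * C) 1 1 = (η * C) 0 0 := by simp [h11]
    have hdet := det_diagonal_one_neg_one_mul_eq_one hC h11
    obtain ⟨χ, ω, hω0, hω2π, hboost⟩ :=
      exists_eq_boostMatrix hH.isHermitian hH.diag_pos hdiag hdet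
    refine ⟨χ, ω, hω0, hω2π, ?_⟩
    rw [← diagonal_one_neg_one_mul_boostMatrix, ← hboost, ← mul_assoc,
      diagonal_one_neg_one_mul_self, one_mul]
  · rintro ⟨χ, ω, -, -, rfl⟩
    rw [← diagonal_one_neg_one_mul_boostMatrix]
    constructor
    · rw [← mul_assoc, diagonal_one_neg_one_mul_boostMatrix_mul_diagonal_one_neg_one,
        boostMatrix_mul_boostMatrix, neg_add_cancel, boostMatrix_zero]
    · rw [← mul_assoc, diagonal_one_neg_one_mul_self, one_mul]
      exact posDef_boostMatrix χ ω
end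

section
/- Let L be a closed symmetric operator on a complex Hilbert space K with empty resolvent set. Define on H = K ⊕ K the operator A = L ⊕ L* and J(x,y) = (y,x). Then J is a self-adjoint involution, A is J-self-adjoint (i.e., JAJ = A*), and the resolvent set of A is empty. -/
open scoped InnerProductSpace LinearPMap

/-- The resolvent set of a (possibly unbounded) operator `A`: points `μ` for which
`A - μ` has a bounded everywhere-defined inverse. -/
def ResolventSet {H : Type*} [NormedAddCommGroup H] [InnerProductSpace ℂ H]
    (A : H →ₗ.[ℂ] H) : Set ℂ :=
  {μ | ∃ B : H →L[ℂ] H, ∃ hB : ∀ x : H, B x ∈ A.domain,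
    (∀ x : H, A ⟨B x, hB x⟩ - μ • B x = x) ∧
    (∀ x : A.domain, B ((A x : H) - μ • (x : H)) = (x : H))}

/-!
Write `A = L ⊕ L†`. Testing against vectors `(x, 0)` and `(0, y)` shows `A† = L† ⊕ L††`, and
`L†† = L` because the graph of `L` is closed: the graph of an adjoint is the orthogonal complement
of the rotated graph, so the double adjoint is the double orthogonal complement. Hence
`A† = L† ⊕ L = JAJ`. A bounded inverse of `A - μ`, compressed to the first summand, inverts
`L - μ`, so `ρ(A) ⊆ ρ(L) = ∅`.
-/

open WithLp

namespace Submodule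

variable {𝕜 E F : Type*} [RCLike 𝕜] [NormedAddCommGroup E] [InnerProductSpace 𝕜 E]
  [NormedAddCommGroup F] [InnerProductSpace 𝕜 F]

theorem adjoint_adjoint_of_isClosed [CompleteSpace E] [CompleteSpace F]
    {g : Submodule 𝕜 (E × F)} (hg : IsClosed (g : Set (E × F))) : g.adjoint.adjoint = g := by
  set G := g.comap (WithLp.linearEquiv 2 𝕜 (E × F)).toLinearMap
  have : CompleteSpace G := (hg.preimage (prod_continuous_ofLp _ _ _)).completeSpace_coe
  have hadj (x : F × E) : x ∈ g.adjoint ↔ toLp 2 (-x.2, x.1) ∈ Gᗮ := by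
    simp only [mem_adjoint_iff, mem_orthogonal, prod_inner_apply, inner_neg_right]
    constructor
    · intro h u hu
      linear_combination h _ _ hu
    · intro h a b hab
      linear_combination h (toLp 2 (a, b)) hab
  ext y
  change y ∈ g.adjoint.adjoint ↔ toLp 2 y ∈ G
  rw [← G.orthogonal_orthogonal, mem_adjoint_iff, mem_orthogonal]
  constructor
  · intro h v hv
    have := h (ofLp v).2 (-(ofLp v).1) ((hadj _).2 (by rwa [neg_neg]))
    simp only [prod_inner_apply, inner_neg_left] at this ⊢
    linear_combination -this
  · intro h a b hab
    have := h _ ((hadj (a, b)).1 hab)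
    simp only [prod_inner_apply, inner_neg_left] at this ⊢
    linear_combination -this

end Submodule

namespace LinearPMap

section Adjoint

variable {𝕜 E F : Type*} [RCLike 𝕜] [NormedAddCommGroup E] [InnerProductSpace 𝕜 E]
  [NormedAddCommGroup F] [InnerProductSpace 𝕜 F] [CompleteSpace E] [CompleteSpace F]
  {T : E →ₗ.[𝕜] F}

theorem dense_adjoint_domain (hT : Dense (T.domain : Set E)) (hc : T.IsClosed) :
    Dense (T†.domain : Set F) := by
  rw [Submodule.dense_iff_topologicalClosure_eq_top, Submodule.topologicalClosure_eq_top_iff,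
    Submodule.eq_bot_iff]
  intro z hz
  have hgraph : ((0 : E), z) ∈ T.graph := by
    rw [← Submodule.adjoint_adjoint_of_isClosed hc, ← adjoint_graph_eq_graph_adjoint hT,
      Submodule.mem_adjoint_iff]
    intro a b hab
    rw [inner_zero_right, zero_sub, neg_eq_zero]
    exact hz a (mem_domain_of_mem_graph hab)
  exact T.graph_fst_eq_zero_snd hgraph rfl

theorem adjoint_adjoint_of_isClosed (hT : Dense (T.domain : Set E)) (hc : T.IsClosed) :
    T†† = T :=
  eq_of_eq_graph <| by
    rw [adjoint_graph_eq_graph_adjoint (dense_adjoint_domain hT hc),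
      adjoint_graph_eq_graph_adjoint hT, Submodule.adjoint_adjoint_of_isClosed hc]

end Adjoint

section ProdMap

variable {𝕜 E F : Type*} [RCLike 𝕜] [NormedAddCommGroup E] [InnerProductSpace 𝕜 E]
  [NormedAddCommGroup F] [InnerProductSpace 𝕜 F]

structure IsProdMap (A : WithLp 2 (E × F) →ₗ.[𝕜] WithLp 2 (E × F)) (S : E →ₗ.[𝕜] E)
    (T : F →ₗ.[𝕜] F) : Prop where
  mem_domain_iff (p : WithLp 2 (E × F)) :
    p ∈ A.domain ↔ (ofLp p).1 ∈ S.domain ∧ (ofLp p).2 ∈ T.domain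
  apply_eq (p : A.domain) (h₁ : (ofLp (p : WithLp 2 (E × F))).1 ∈ S.domain)
    (h₂ : (ofLp (p : WithLp 2 (E × F))).2 ∈ T.domain) :
    A p = toLp 2 (S ⟨_, h₁⟩, T ⟨_, h₂⟩)

variable {A : WithLp 2 (E × F) →ₗ.[𝕜] WithLp 2 (E × F)} {S : E →ₗ.[𝕜] E} {T : F →ₗ.[𝕜] F}

namespace IsProdMap

theorem toLp_mem_domain (h : IsProdMap A S T) (x : S.domain) (y : T.domain) :
    toLp 2 ((x : E), (y : F)) ∈ A.domain :=
  (h.mem_domain_iff _).2 ⟨x.2, y.2⟩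

theorem apply_toLp (h : IsProdMap A S T) (x : S.domain) (y : T.domain) :
    A ⟨_, h.toLp_mem_domain x y⟩ = toLp 2 (S x, T y) :=
  h.apply_eq _ x.2 y.2

theorem dense_domain (h : IsProdMap A S T) (hS : Dense (S.domain : Set E))
    (hT : Dense (T.domain : Set F)) : Dense (A.domain : Set (WithLp 2 (E × F))) :=
  ((hS.prod hT).preimage (WithLp.prodContinuousLinearEquiv 2 𝕜 E F).toHomeomorph.isOpenMap).mono
    fun p hp ↦ (h.mem_domain_iff p).2 hp

section Adjoint

variable [CompleteSpace E] [CompleteSpace F]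

theorem inner_adjoint_apply (h : IsProdMap A S T) (hS : Dense (S.domain : Set E))
    (hT : Dense (T.domain : Set F)) (p : A†.domain) (x : S.domain) (y : T.domain) :
    ⟪(ofLp (A† p)).1, (x : E)⟫_𝕜 + ⟪(ofLp (A† p)).2, (y : F)⟫_𝕜 =
      ⟪(ofLp (p : WithLp 2 (E × F))).1, S x⟫_𝕜 + ⟪(ofLp (p : WithLp 2 (E × F))).2, T y⟫_𝕜 := by
  have := adjoint_isFormalAdjoint (h.dense_domain hS hT) p ⟨_, h.toLp_mem_domain x y⟩
  rwa [h.apply_toLp] at this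

theorem inner_toLp_adjoint (h : IsProdMap A S T) (hS : Dense (S.domain : Set E))
    (hT : Dense (T.domain : Set F)) (x : S†.domain) (y : T†.domain) (q : A.domain) :
    ⟪toLp 2 (S† x, T† y), (q : WithLp 2 (E × F))⟫_𝕜 = ⟪toLp 2 ((x : E), (y : F)), A q⟫_𝕜 := by
  obtain ⟨hq₁, hq₂⟩ := (h.mem_domain_iff q).1 q.2
  rw [h.apply_eq q hq₁ hq₂, prod_inner_apply, prod_inner_apply]
  exact congrArg₂ (· + ·) (adjoint_isFormalAdjoint hS x ⟨_, hq₁⟩)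
    (adjoint_isFormalAdjoint hT y ⟨_, hq₂⟩)

theorem adjoint (h : IsProdMap A S T) (hS : Dense (S.domain : Set E))
    (hT : Dense (T.domain : Set F)) : IsProdMap A† S† T† where
  mem_domain_iff p := by
    refine ⟨fun hp ↦ ⟨?_, ?_⟩, fun ⟨h₁, h₂⟩ ↦ mem_adjoint_domain_of_exists p
      ⟨_, h.inner_toLp_adjoint hS hT ⟨_, h₁⟩ ⟨_, h₂⟩⟩⟩
    · refine mem_adjoint_domain_of_exists _ ⟨(ofLp (A† ⟨p, hp⟩)).1, fun x ↦ ?_⟩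
      simpa using h.inner_adjoint_apply hS hT ⟨p, hp⟩ x 0
    · refine mem_adjoint_domain_of_exists _ ⟨(ofLp (A† ⟨p, hp⟩)).2, fun y ↦ ?_⟩
      simpa using h.inner_adjoint_apply hS hT ⟨p, hp⟩ 0 y
  apply_eq p h₁ h₂ :=
    adjoint_apply_eq (h.dense_domain hS hT) p (h.inner_toLp_adjoint hS hT ⟨_, h₁⟩ ⟨_, h₂⟩)

end Adjoint

end IsProdMap

end ProdMap

end LinearPMap

section Swap

variable {𝕜 E : Type*} [RCLike 𝕜] [NormedAddCommGroup E] [InnerProductSpace 𝕜 E]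

theorem isSelfAdjoint_of_apply_eq_swap [CompleteSpace E]
    {J : WithLp 2 (E × E) →L[𝕜] WithLp 2 (E × E)}
    (hJ : ∀ p, J p = toLp 2 ((ofLp p).2, (ofLp p).1)) : IsSelfAdjoint J := by
  rw [ContinuousLinearMap.isSelfAdjoint_iff_isSymmetric]
  intro p q
  change ⟪J p, q⟫_𝕜 = ⟪p, J q⟫_𝕜
  rw [hJ, hJ, prod_inner_apply, prod_inner_apply, add_comm]

theorem mul_self_eq_one_of_apply_eq_swap {J : WithLp 2 (E × E) →L[𝕜] WithLp 2 (E × E)}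
    (hJ : ∀ p, J p = toLp 2 ((ofLp p).2, (ofLp p).1)) : J * J = 1 := by
  ext1 p
  change J (J p) = p
  rw [hJ, hJ]

namespace LinearPMap.IsProdMap

variable {A B : WithLp 2 (E × E) →ₗ.[𝕜] WithLp 2 (E × E)} {S T : E →ₗ.[𝕜] E}
  {J : WithLp 2 (E × E) → WithLp 2 (E × E)}

theorem mem_domain_iff_swap (hB : IsProdMap B T S) (hA : IsProdMap A S T)
    (hJ : ∀ p, J p = toLp 2 ((ofLp p).2, (ofLp p).1)) (p : WithLp 2 (E × E)) :
    p ∈ B.domain ↔ J p ∈ A.domain := by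
  rw [hB.mem_domain_iff, hA.mem_domain_iff, hJ, and_comm]

theorem apply_eq_swap (hB : IsProdMap B T S) (hA : IsProdMap A S T)
    (hJ : ∀ p, J p = toLp 2 ((ofLp p).2, (ofLp p).1)) (p : B.domain) (hp : J p ∈ A.domain) :
    B p = J (A ⟨J p, hp⟩) := by
  obtain ⟨h₁, h₂⟩ := (hA.mem_domain_iff _).1 hp
  obtain ⟨h₁', h₂'⟩ := (hB.mem_domain_iff _).1 p.2
  rw [hB.apply_eq p h₁' h₂', hA.apply_eq ⟨J p, hp⟩ h₁ h₂, hJ (toLp 2 _)]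
  congr 4 <;> simp [hJ]

end LinearPMap.IsProdMap

end Swap

theorem LinearPMap.IsProdMap.resolventSet_subset {E F : Type*} [NormedAddCommGroup E]
    [InnerProductSpace ℂ E] [NormedAddCommGroup F] [InnerProductSpace ℂ F]
    {A : WithLp 2 (E × F) →ₗ.[ℂ] WithLp 2 (E × F)} {S : E →ₗ.[ℂ] E} {T : F →ₗ.[ℂ] F}
    (h : IsProdMap A S T) : ResolventSet A ⊆ ResolventSet S := by
  rintro μ ⟨R, hR, hR_right, hR_left⟩
  let e := WithLp.prodContinuousLinearEquiv 2 ℂ E F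
  let R₁ : E →L[ℂ] E := .fst ℂ E F ∘L e.toContinuousLinearMap ∘L R ∘L
    e.symm.toContinuousLinearMap ∘L .inl ℂ E F
  have hR₁ (x : E) : R₁ x = (ofLp (R (toLp 2 (x, 0)))).1 := rfl
  have hR₁_mem (x : E) : R₁ x ∈ S.domain := ((h.mem_domain_iff _).1 (hR _)).1
  refine ⟨R₁, hR₁_mem, fun x ↦ ?_, fun x ↦ ?_⟩
  · obtain ⟨h₁, h₂⟩ := (h.mem_domain_iff _).1 (hR (toLp 2 (x, 0)))
    have := hR_right (toLp 2 (x, 0))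
    rw [h.apply_eq _ h₁ h₂] at this
    exact congrArg (fun r ↦ (ofLp r).1) this
  · have := hR_left ⟨_, h.toLp_mem_domain x 0⟩
    rw [h.apply_toLp, map_zero] at this
    have hsplit : toLp 2 (S x - μ • (x : E), (0 : F)) =
        toLp 2 (S x, 0) - μ • toLp 2 ((x : E), 0) := by
      rw [← toLp_smul, ← toLp_sub, Prod.smul_mk, Prod.mk_sub_mk, smul_zero, sub_zero]
    rw [hR₁, hsplit]
    exact congrArg (fun r ↦ (ofLp r).1) this

open LinearPMap in
theorem stmt7_general {K : Type*} [NormedAddCommGroup K] [InnerProductSpace ℂ K] [CompleteSpace K]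
    (L : K →ₗ.[ℂ] K) (hdense : Dense (L.domain : Set K))
    (hclosed : IsClosed (L.graph : Set (K × K)))
    (hρ : ResolventSet L = ∅)
    (A : WithLp 2 (K × K) →ₗ.[ℂ] WithLp 2 (K × K))
    (hAdom : ∀ p : WithLp 2 (K × K), p ∈ A.domain ↔
      (WithLp.equiv 2 (K × K) p).1 ∈ L.domain ∧
      (WithLp.equiv 2 (K × K) p).2 ∈ L.adjoint.domain)
    (hAval : ∀ (p : A.domain) (h1 : (WithLp.equiv 2 (K × K) (p : WithLp 2 (K × K))).1 ∈ L.domain)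
      (h2 : (WithLp.equiv 2 (K × K) (p : WithLp 2 (K × K))).2 ∈ L.adjoint.domain),
      A p = (WithLp.equiv 2 (K × K)).symm
        (L ⟨(WithLp.equiv 2 (K × K) (p : WithLp 2 (K × K))).1, h1⟩,
         L.adjoint ⟨(WithLp.equiv 2 (K × K) (p : WithLp 2 (K × K))).2, h2⟩))
    (J : WithLp 2 (K × K) →L[ℂ] WithLp 2 (K × K))
    (hJ : ∀ p : WithLp 2 (K × K), J p = (WithLp.equiv 2 (K × K)).symm
      ((WithLp.equiv 2 (K × K) p).2, (WithLp.equiv 2 (K × K) p).1)) :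
    IsSelfAdjoint J ∧ J * J = 1 ∧
    (∀ p : WithLp 2 (K × K), p ∈ A.adjoint.domain ↔ J p ∈ A.domain) ∧
    (∀ (p : A.adjoint.domain) (h : J (p : WithLp 2 (K × K)) ∈ A.domain),
      A.adjoint p = J (A ⟨J (p : WithLp 2 (K × K)), h⟩)) ∧
    ResolventSet A = ∅ := by
  have hA : IsProdMap A L L† := ⟨hAdom, hAval⟩
  have hA_adjoint : IsProdMap A† L† L := by
    simpa only [adjoint_adjoint_of_isClosed hdense hclosed] using
      hA.adjoint hdense (dense_adjoint_domain hdense hclosed)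
  exact ⟨isSelfAdjoint_of_apply_eq_swap hJ, mul_self_eq_one_of_apply_eq_swap hJ,
    hA_adjoint.mem_domain_iff_swap hA hJ, hA_adjoint.apply_eq_swap hA hJ,
    Set.subset_eq_empty hA.resolventSet_subset hρ⟩

/-- For a closed symmetric `L` with empty resolvent set, the operator
`A = L ⊕ L*` on `H = K ⊕ K` with `J(x,y) = (y,x)` satisfies: `J` is a self-adjoint
involution, `A` is `J`-self-adjoint (`A* = JAJ`), and `ρ(A) = ∅`. -/
theorem stmt7 {K : Type*} [NormedAddCommGroup K] [InnerProductSpace ℂ K] [CompleteSpace K]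
    (L : K →ₗ.[ℂ] K) (hdense : Dense (L.domain : Set K))
    (hclosed : IsClosed (L.graph : Set (K × K)))
    (hsym : ∀ x y : L.domain, ⟪(L x : K), (y : K)⟫_ℂ = ⟪(x : K), (L y : K)⟫_ℂ)
    (hρ : ResolventSet L = ∅)
    (A : WithLp 2 (K × K) →ₗ.[ℂ] WithLp 2 (K × K))
    (hAdom : ∀ p : WithLp 2 (K × K), p ∈ A.domain ↔
      (WithLp.equiv 2 (K × K) p).1 ∈ L.domain ∧
      (WithLp.equiv 2 (K × K) p).2 ∈ L.adjoint.domain)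
    (hAval : ∀ (p : A.domain) (h1 : (WithLp.equiv 2 (K × K) (p : WithLp 2 (K × K))).1 ∈ L.domain)
      (h2 : (WithLp.equiv 2 (K × K) (p : WithLp 2 (K × K))).2 ∈ L.adjoint.domain),
      A p = (WithLp.equiv 2 (K × K)).symm
        (L ⟨(WithLp.equiv 2 (K × K) (p : WithLp 2 (K × K))).1, h1⟩,
         L.adjoint ⟨(WithLp.equiv 2 (K × K) (p : WithLp 2 (K × K))).2, h2⟩))
    (J : WithLp 2 (K × K) →L[ℂ] WithLp 2 (K × K))
    (hJ : ∀ p : WithLp 2 (K × K), J p = (WithLp.equiv 2 (K × K)).symm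
      ((WithLp.equiv 2 (K × K) p).2, (WithLp.equiv 2 (K × K) p).1)) :
    IsSelfAdjoint J ∧ J * J = 1 ∧
    (∀ p : WithLp 2 (K × K), p ∈ A.adjoint.domain ↔ J p ∈ A.domain) ∧
    (∀ (p : A.adjoint.domain) (h : J (p : WithLp 2 (K × K)) ∈ A.domain),
      A.adjoint p = J (A ⟨J (p : WithLp 2 (K × K)), h⟩)) ∧
    ResolventSet A = ∅ :=
  stmt7_general L hdense hclosed hρ A hAdom hAval J hJ
end

section
/- Let A be a densely defined operator on a complex Hilbert space with A* = JAJ for a self-adjoint involution J, and suppose there is a bounded operator C with C² = I, JC > 0, and AC = CA (C maps dom A into dom A and commutes with A there). Then A is similar to a self-adjoint operator: there is a bounded boundedly invertible operator T such that TAT⁻¹ is self-adjoint. -/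
/-!
`G = JC` is positive and invertible (with inverse `CJ`), so `T = √G` is bounded, boundedly
invertible and self-adjoint. For a self-adjoint `T` the adjoint of `TAT⁻¹` is `T⁻¹A†T`; moreover
`A† = JAJ` and, since `C² = I` and `CA ⊆ AC`, `A = CAC`. Hence
`(TAT⁻¹)† = (T⁻¹JC) A (T⁻¹JC)⁻¹ = TAT⁻¹`, because `T⁻¹JC = T⁻¹T² = T`.
-/

open scoped InnerProductSpace LinearPMap

namespace LinearPMap

section Conj

variable {R E F G : Type*} [Ring R] [AddCommGroup E] [Module R E] [AddCommGroup F] [Module R F]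
  [AddCommGroup G] [Module R G]

def conj (e : E ≃ₗ[R] F) (A : E →ₗ.[R] E) : F →ₗ.[R] F where
  domain := A.domain.map e.toLinearMap
  toFun := e.toLinearMap ∘ₗ A.toFun ∘ₗ (e.submoduleMap A.domain).symm.toLinearMap

variable (e : E ≃ₗ[R] F) (A : E →ₗ.[R] E)

theorem mem_conj_domain {y : F} : y ∈ (conj e A).domain ↔ e.symm y ∈ A.domain :=
  Submodule.mem_map_equiv A.domain

theorem conj_apply (x : A.domain) (h : e x ∈ (conj e A).domain) :
    conj e A ⟨e x, h⟩ = e (A x) := by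
  have hx : e.submoduleMap A.domain x = ⟨e x, h⟩ := Subtype.ext (e.submoduleMap_apply _ x)
  change e (A ((e.submoduleMap A.domain).symm ⟨e x, h⟩)) = e (A x)
  rw [← hx, LinearEquiv.symm_apply_apply]

theorem conj_apply' (y : (conj e A).domain) :
    conj e A y = e (A ⟨e.symm y, (mem_conj_domain e A).mp y.2⟩) := by
  obtain ⟨y, hy⟩ := y
  simpa using conj_apply e A ⟨e.symm y, (mem_conj_domain e A).mp hy⟩ (by simpa using hy)

theorem conj_trans (f : F ≃ₗ[R] G) : conj f (conj e A) = conj (e.trans f) A := by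
  refine ext (Submodule.map_comp _ _ _).symm fun _ _ _ => ?_
  rw [conj_apply', conj_apply', conj_apply']
  rfl

theorem eq_conj_of_involutive {e : E ≃ₗ[R] E} (he : ∀ x, e (e x) = x) {B : E →ₗ.[R] E}
    (hdom : ∀ x, x ∈ B.domain ↔ e x ∈ A.domain)
    (hval : ∀ (x : B.domain) (h : e x ∈ A.domain), B x = e (A ⟨e x, h⟩)) :
    B = conj e A := by
  have hsymm : ∀ x, e.symm x = e x := fun x => by rw [e.symm_apply_eq, he]
  refine ext (Submodule.ext fun x => ?_) fun x hx _ => ?_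
  · rw [hdom, mem_conj_domain, hsymm]
  · simp only [hval ⟨x, hx⟩ ((hdom x).mp hx), conj_apply', hsymm]

theorem conj_eq_self_of_involutive {e : E ≃ₗ[R] E} (he : ∀ x, e (e x) = x)
    (hcomm : ∀ x : A.domain, ∃ h : e x ∈ A.domain, A ⟨e x, h⟩ = e (A x)) :
    conj e A = A := by
  have hdom : ∀ x, x ∈ A.domain ↔ e x ∈ A.domain := fun x =>
    ⟨fun hx => (hcomm ⟨x, hx⟩).1, fun hx => he x ▸ (hcomm ⟨e x, hx⟩).1⟩
  refine (eq_conj_of_involutive A he hdom fun x h => ?_).symm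
  obtain ⟨_, hval⟩ := hcomm ⟨e x, h⟩
  simp only [he] at hval
  rw [← hval]

end Conj

theorem dense_conj_domain {R E F : Type*} [Ring R] [AddCommGroup E] [Module R E]
    [TopologicalSpace E] [AddCommGroup F] [Module R F] [TopologicalSpace F]
    {A : E →ₗ.[R] E} (T : E ≃L[R] F) (hA : Dense (A.domain : Set E)) :
    Dense ((conj T.toLinearEquiv A).domain : Set F) := by
  change Dense ((A.domain.map T.toLinearEquiv.toLinearMap : Submodule R F) : Set F)
  rw [Submodule.map_coe]
  exact T.surjective.denseRange.dense_image T.continuous hA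

section Adjoint

variable {𝕜 E F : Type*} [RCLike 𝕜] [NormedAddCommGroup E] [InnerProductSpace 𝕜 E]
  [CompleteSpace E] [NormedAddCommGroup F] [InnerProductSpace 𝕜 F] [CompleteSpace F]
  {A : E →ₗ.[𝕜] E}

-- `hST` says that `S = (T†)⁻¹`.
theorem adjoint_conj (hA : Dense (A.domain : Set E)) (T S : E ≃L[𝕜] F)
    (hST : ∀ x y, ⟪S x, T y⟫_𝕜 = ⟪x, y⟫_𝕜) :
    (conj T.toLinearEquiv A)† = conj S.toLinearEquiv A† := by
  have hTS : ∀ x y, ⟪T x, S y⟫_𝕜 = ⟪x, y⟫_𝕜 := fun x y => by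
    rw [← inner_conj_symm, hST, inner_conj_symm]
  have hA' := dense_conj_domain T hA
  have hle : conj S.toLinearEquiv A† ≤ (conj T.toLinearEquiv A)† := by
    refine IsFormalAdjoint.le_adjoint hA' fun x y => ?_
    simp only [conj_apply', ContinuousLinearEquiv.coe_toLinearEquiv,
      ContinuousLinearEquiv.coe_symm_toLinearEquiv]
    conv_lhs => rw [← S.apply_symm_apply (y : F)]
    conv_rhs => rw [← T.apply_symm_apply (x : F)]
    rw [hTS, hTS]
    exact (adjoint_isFormalAdjoint hA).symm ⟨_, _⟩ ⟨_, _⟩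
  refine (eq_of_le_of_domain_eq hle (le_antisymm hle.1 fun y hy => ?_)).symm
  rw [mem_conj_domain]
  refine mem_adjoint_domain_of_exists _ ⟨S.symm ((conj T.toLinearEquiv A)† ⟨y, hy⟩), fun u => ?_⟩
  have := (adjoint_isFormalAdjoint hA') ⟨y, hy⟩ ⟨T u, (mem_conj_domain _ A).mpr (by simp)⟩
  simp only [conj_apply', ContinuousLinearEquiv.coe_toLinearEquiv,
      ContinuousLinearEquiv.coe_symm_toLinearEquiv, ContinuousLinearEquiv.symm_apply_apply] at this ⊢
  rwa [← hST, ← hST, S.apply_symm_apply, S.apply_symm_apply]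

theorem adjoint_conj_of_isSelfAdjoint (hA : Dense (A.domain : Set E)) (T : E ≃L[𝕜] E)
    (hT : IsSelfAdjoint (T : E →L[𝕜] E)) :
    (conj T.toLinearEquiv A)† = conj T.symm.toLinearEquiv A† :=
  adjoint_conj hA T T.symm fun x y => by simpa using (hT.isSymmetric (T.symm x) y).symm

end Adjoint

end LinearPMap

theorem stmt10_general {H : Type*} [NormedAddCommGroup H] [InnerProductSpace ℂ H] [CompleteSpace H]
    (A : H →ₗ.[ℂ] H) (hdense : Dense (A.domain : Set H))
    (J : H →L[ℂ] H) (hJ2 : J * J = 1)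
    (hdom : ∀ x : H, x ∈ A.adjoint.domain ↔ J x ∈ A.domain)
    (hval : ∀ (x : A.adjoint.domain) (h : J (x : H) ∈ A.domain),
      A.adjoint x = J (A ⟨J (x : H), h⟩))
    (C : H →L[ℂ] H) (hC2 : C * C = 1)
    (hJCpos : (J * C).IsPositive)
    (hAC : ∀ x : A.domain, ∃ h : C x ∈ A.domain, A ⟨C x, h⟩ = C (A x)) :
    ∃ T : H ≃L[ℂ] H, ∃ B : H →ₗ.[ℂ] H, IsSelfAdjoint B ∧
      B.domain = A.domain.map (T.toLinearEquiv.toLinearMap) ∧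
      ∀ (x : A.domain) (h : T (x : H) ∈ B.domain), B ⟨T (x : H), h⟩ = T (A x) := by
  have hJ (x : H) : J (J x) = x := congr($hJ2 x)
  have hC (x : H) : C (C x) = x := congr($hC2 x)
  have hJC_nonneg : 0 ≤ J * C := (ContinuousLinearMap.nonneg_iff_isPositive _).mpr hJCpos
  have hJC_unit : IsUnit (J * C) :=
    ⟨⟨J * C, C * J, by simp [mul_assoc, ← mul_assoc C C, hC2, hJ2],
      by simp [mul_assoc, ← mul_assoc J J, hC2, hJ2]⟩, rfl⟩
  obtain ⟨u, hu⟩ := (CFC.isUnit_sqrt_iff (J * C)).mpr hJC_unit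
  let T := ContinuousLinearEquiv.unitsEquiv ℂ H u
  have hT_sa : IsSelfAdjoint (T : H →L[ℂ] H) :=
    show IsSelfAdjoint (u : H →L[ℂ] H) from hu ▸ IsSelfAdjoint.of_nonneg (CFC.sqrt_nonneg _)
  have hTT (x : H) : T (T x) = J (C x) := by
    have := congr($(CFC.sqrt_mul_sqrt_self (J * C) hJC_nonneg) x)
    rwa [← hu] at this
  let Je := LinearEquiv.ofInvolutive J.toLinearMap hJ
  let Ce := LinearEquiv.ofInvolutive C.toLinearMap hC
  have hA_adjoint : A† = LinearPMap.conj Je A := LinearPMap.eq_conj_of_involutive A hJ hdom hval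
  have hCA : LinearPMap.conj Ce A = A := LinearPMap.conj_eq_self_of_involutive A hC hAC
  have hT : Ce.trans (Je.trans T.symm.toLinearEquiv) = T.toLinearEquiv :=
    LinearEquiv.ext fun x => T.symm_apply_eq.mpr (hTT x).symm
  refine ⟨T, LinearPMap.conj T.toLinearEquiv A, ?_, rfl, LinearPMap.conj_apply _ A⟩
  rw [LinearPMap.isSelfAdjoint_def, LinearPMap.adjoint_conj_of_isSelfAdjoint hdense T hT_sa,
    hA_adjoint, ← congr(LinearPMap.conj Je $hCA), LinearPMap.conj_trans, LinearPMap.conj_trans, hT]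

/-- A `J`-self-adjoint operator `A` (i.e. `A* = JAJ`) possessing a `C`-symmetry
(`C² = I`, `JC > 0`, `AC = CA`) is similar to a self-adjoint operator: there is a bounded
boundedly invertible `T` such that `T A T⁻¹` is self-adjoint. -/
theorem stmt10 {H : Type*} [NormedAddCommGroup H] [InnerProductSpace ℂ H] [CompleteSpace H]
    (A : H →ₗ.[ℂ] H) (hdense : Dense (A.domain : Set H))
    (J : H →L[ℂ] H) (hJsa : IsSelfAdjoint J) (hJ2 : J * J = 1)
    (hdom : ∀ x : H, x ∈ A.adjoint.domain ↔ J x ∈ A.domain)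
    (hval : ∀ (x : A.adjoint.domain) (h : J (x : H) ∈ A.domain),
      A.adjoint x = J (A ⟨J (x : H), h⟩))
    (C : H →L[ℂ] H) (hC2 : C * C = 1)
    (hJCpos : (J * C).IsPositive)
    (hJCposdef : ∀ x : H, x ≠ 0 → 0 < (⟪(J * C) x, x⟫_ℂ).re)
    (hJCinv : ∃ D : H →L[ℂ] H, (J * C) * D = 1 ∧ D * (J * C) = 1)
    (hAC : ∀ x : A.domain, ∃ h : C x ∈ A.domain, A ⟨C x, h⟩ = C (A x)) :
    ∃ T : H ≃L[ℂ] H, ∃ B : H →ₗ.[ℂ] H, IsSelfAdjoint B ∧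
      B.domain = A.domain.map (T.toLinearEquiv.toLinearMap) ∧
      ∀ (x : A.domain) (h : T (x : H) ∈ B.domain), B ⟨T (x : H), h⟩ = T (A x) :=
  stmt10_general A hdense J hJ2 hdom hval C hC2 hJCpos hAC
end

section
/- Let s₊, s₋ : ℂ₊ → ℂ be holomorphic functions on the upper half-plane with s₊(i) = s₋(i) = 0. Fix φ, γ, ξ ∈ [0,2π) and q, r ≥ 0 with q² + r² = 1. The 2×2 determinant det [[q e^{i(φ+γ)}, -1 + r e^{i(φ-ξ)} s₋(μ)], [r e^{i(φ+ξ)} + s₊(μ), -q e^{i(φ-γ)} s₋(μ)]] vanishes for all μ ∈ ℂ₊ if and only if r = 0 and e^{2iφ} s₋(μ) = s₊(μ) for all μ ∈ ℂ₊. -/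
/-!
Expanding the determinant and using `q² + r² = 1` turns it into
`r e^{i(φ+ξ)} + s₊(μ) - e^{2iφ} s₋(μ) - r e^{i(φ-ξ)} s₊(μ) s₋(μ)`.
At `μ = i` only the first term survives, so `r = 0`; after that the determinant is
`s₊ - e^{2iφ} s₋`.
-/

open Complex

theorem exp_I_mul_add_mul_exp_I_mul_sub (φ γ : ℂ) :
    exp (I * (φ + γ)) * exp (I * (φ - γ)) = exp (2 * I * φ) := by
  rw [← exp_add]
  ring_nf

theorem det_expand_of_sq_add_sq_eq_one {q r : ℂ} (hqr : q ^ 2 + r ^ 2 = 1) (φ γ ξ a b : ℂ) :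
    q * exp (I * (φ + γ)) * (-(q * exp (I * (φ - γ))) * b) -
        (-1 + r * exp (I * (φ - ξ)) * b) * (r * exp (I * (φ + ξ)) + a) =
      r * exp (I * (φ + ξ)) + a - exp (2 * I * φ) * b - r * exp (I * (φ - ξ)) * a * b := by
  linear_combination (-q ^ 2 * b) * exp_I_mul_add_mul_exp_I_mul_sub φ γ +
    (-r ^ 2 * b) * exp_I_mul_add_mul_exp_I_mul_sub φ ξ - exp (2 * I * φ) * b * hqr

theorem stmt13_general (sp sm : ℂ → ℂ)
    (hspi : sp Complex.I = 0) (hsmi : sm Complex.I = 0)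
    (φ γ ξ q r : ℝ)
    (hqr : q ^ 2 + r ^ 2 = 1) :
    (∀ μ : ℂ, 0 < μ.im →
        ((q : ℂ) * Complex.exp (Complex.I * (φ + γ))) *
          (-((q : ℂ) * Complex.exp (Complex.I * (φ - γ))) * sm μ) -
        (-1 + (r : ℂ) * Complex.exp (Complex.I * (φ - ξ)) * sm μ) *
          ((r : ℂ) * Complex.exp (Complex.I * (φ + ξ)) + sp μ) = 0) ↔
      (r = 0 ∧ ∀ μ : ℂ, 0 < μ.im → Complex.exp (2 * Complex.I * φ) * sm μ = sp μ) := by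
  have hqrC : (q : ℂ) ^ 2 + (r : ℂ) ^ 2 = 1 := by exact_mod_cast hqr
  simp only [det_expand_of_sq_add_sq_eq_one hqrC]
  constructor
  · intro h
    have hr : r = 0 := by simpa [hspi, hsmi, exp_ne_zero] using h I (by simp)
    subst hr
    refine ⟨rfl, fun μ hμ => ?_⟩
    have hμ' := h μ hμ
    push_cast at hμ'
    linear_combination -hμ'
  · rintro ⟨rfl, heq⟩ μ hμ
    push_cast
    linear_combination -heq μ hμ

/-- For holomorphic `s₊, s₋` on the upper half-plane vanishing at `i`, and
parameters `q, r ≥ 0`, `q² + r² = 1`, `φ, γ, ξ ∈ [0,2π)`, the determinant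
`det [[q e^{i(φ+γ)}, -1 + r e^{i(φ-ξ)} s₋(μ)], [r e^{i(φ+ξ)} + s₊(μ), -q e^{i(φ-γ)} s₋(μ)]]`
vanishes for all `μ ∈ ℂ₊` iff `r = 0` and `e^{2iφ} s₋ = s₊` on `ℂ₊`. -/
theorem stmt13 (sp sm : ℂ → ℂ)
    (hsp : DifferentiableOn ℂ sp {z : ℂ | 0 < z.im})
    (hsm : DifferentiableOn ℂ sm {z : ℂ | 0 < z.im})
    (hspi : sp Complex.I = 0) (hsmi : sm Complex.I = 0)
    (φ γ ξ q r : ℝ)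
    (hφ : 0 ≤ φ ∧ φ < 2 * Real.pi) (hγ : 0 ≤ γ ∧ γ < 2 * Real.pi)
    (hξ : 0 ≤ ξ ∧ ξ < 2 * Real.pi)
    (hq : 0 ≤ q) (hr : 0 ≤ r) (hqr : q ^ 2 + r ^ 2 = 1) :
    (∀ μ : ℂ, 0 < μ.im →
        ((q : ℂ) * Complex.exp (Complex.I * (φ + γ))) *
          (-((q : ℂ) * Complex.exp (Complex.I * (φ - γ))) * sm μ) -
        (-1 + (r : ℂ) * Complex.exp (Complex.I * (φ - ξ)) * sm μ) *
          ((r : ℂ) * Complex.exp (Complex.I * (φ + ξ)) + sp μ) = 0) ↔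
      (r = 0 ∧ ∀ μ : ℂ, 0 < μ.im → Complex.exp (2 * Complex.I * φ) * sm μ = sp μ) :=
  stmt13_general sp sm hspi hsmi φ γ ξ q r hqr
end

section
/- Conversely, let S be a densely defined closed symmetric operator commuting with a self-adjoint involution J, with eigenspace decomposition H = H₊ ⊕ H₋ and parts S₊, S₋. If there exists a unitary W : H₊ → H₋ with S₊ = W⁻¹ S₋ W, then the operator R defined blockwise by R(x₊, x₋) = (W⁻¹x₋, Wx₊) is a self-adjoint involution on H satisfying SR = RS and JR = -RJ. -/
/-!
The self-adjoint involution `J` splits `H` into the orthogonal, complementary eigenspaces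
`H₊ = ker (J - 1)` and `H₋ = ker (J + 1)`, which `R` swaps unitarily. Hence `R² = 1`, `R` is an
isometry by Pythagoras, and an isometric involution is self-adjoint; `JR = -RJ` because `R`
exchanges the `±1`-eigenspaces. Since `dom S` is `J`-invariant it splits as
`(dom S ∩ H₊) + (dom S ∩ H₋)`, and on each piece `SR = RS` is the intertwining `S₊ = W⁻¹ S₋ W`.
-/

open scoped InnerProductSpace LinearPMap

open LinearMap (ker)

namespace Module.End

variable {R M : Type*} [CommRing R] [AddCommGroup M] [Module R M] {J : Module.End R M}

theorem mem_ker_sub_one_iff {x : M} : x ∈ ker (J - 1) ↔ J x = x := by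
  simp [sub_eq_zero]

theorem mem_ker_add_one_iff {x : M} : x ∈ ker (J + 1) ↔ J x = -x := by
  simp [add_eq_zero_iff_eq_neg]

variable [Invertible (2 : R)]

theorem le_inf_ker_sub_one_sup_inf_ker_add_one (hJ : Function.Involutive J)
    {D : Submodule R M} (hD : ∀ x ∈ D, J x ∈ D) :
    D ≤ D ⊓ ker (J - 1) ⊔ D ⊓ ker (J + 1) := by
  intro x hx
  refine Submodule.mem_sup.2 ⟨(⅟2 : R) • (x + J x), Submodule.mem_inf.2 ⟨?_, ?_⟩,
    (⅟2 : R) • (x - J x), Submodule.mem_inf.2 ⟨?_, ?_⟩, ?_⟩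
  · exact D.smul_mem _ (D.add_mem hx (hD x hx))
  · rw [mem_ker_sub_one_iff, map_smul, map_add, hJ x, add_comm]
  · exact D.smul_mem _ (D.sub_mem hx (hD x hx))
  · rw [mem_ker_add_one_iff, map_smul, map_sub, hJ x, ← smul_neg, neg_sub]
  · rw [← smul_add, add_add_sub_cancel, ← two_smul R x, smul_smul, invOf_mul_self, one_smul]

theorem codisjoint_ker_sub_one_ker_add_one (hJ : Function.Involutive J) :
    Codisjoint (ker (J - 1)) (ker (J + 1)) := by
  simpa [codisjoint_iff_le_sup] using
    le_inf_ker_sub_one_sup_inf_ker_add_one hJ (D := ⊤) fun _ _ => trivial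

end Module.End

theorem LinearMap.IsSymmetric.ker_sub_one_isOrtho_ker_add_one {𝕜 E : Type*} [RCLike 𝕜]
    [NormedAddCommGroup E] [InnerProductSpace 𝕜 E] {J : E →ₗ[𝕜] E} (hJ : J.IsSymmetric) :
    ker (J - 1) ⟂ ker (J + 1) := by
  refine Submodule.isOrtho_iff_inner_eq.2 fun u hu v hv => ?_
  have h := hJ u v
  rw [Module.End.mem_ker_sub_one_iff.1 hu, Module.End.mem_ker_add_one_iff.1 hv,
    inner_neg_right] at h
  exact CharZero.eq_neg_self_iff.1 h

section BlockSwap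

variable {R M : Type*} [CommRing R] [AddCommGroup M] [Module R M] {U V : Submodule R M}

/-- `T` is the off-diagonal block operator `[[0, W⁻¹], [W, 0]]` with respect to `U` and `V`. -/
def IsBlockSwap (W : U ≃ₗ[R] V) (T : M →ₗ[R] M) : Prop :=
  (∀ x (hx : x ∈ U), T x = W ⟨x, hx⟩) ∧ ∀ y (hy : y ∈ V), T y = W.symm ⟨y, hy⟩

namespace IsBlockSwap

variable {W : U ≃ₗ[R] V} {T : M →ₗ[R] M}

theorem apply_apply (hT : IsBlockSwap W T) (hUV : Codisjoint U V) (x : M) : T (T x) = x := by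
  change (T ∘ₗ T) x = LinearMap.id (R := R) x
  congr 1
  refine LinearMap.ext_on_codisjoint hUV (fun x hx => ?_) fun y hy => ?_
  · simp [hT.1 x hx, hT.2 _ (W ⟨x, hx⟩).2]
  · simp [hT.2 y hy, hT.1 _ (W.symm ⟨y, hy⟩).2]

theorem apply_anticomm (hT : IsBlockSwap W T) (hUV : Codisjoint U V) {J : M →ₗ[R] M}
    (hJU : ∀ x ∈ U, J x = x) (hJV : ∀ y ∈ V, J y = -y) (x : M) : J (T x) = -T (J x) := by
  change (J ∘ₗ T) x = (-(T ∘ₗ J)) x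
  congr 1
  refine LinearMap.ext_on_codisjoint hUV (fun x hx => ?_) fun y hy => ?_
  · simp [hT.1 x hx, hJU x hx, hJV _ (W ⟨x, hx⟩).2]
  · simp [hT.2 y hy, hJV y hy, hJU _ (W.symm ⟨y, hy⟩).2]

end IsBlockSwap

end BlockSwap

namespace IsBlockSwap

variable {𝕜 E : Type*} [RCLike 𝕜] [NormedAddCommGroup E] [InnerProductSpace 𝕜 E]
  {U V : Submodule 𝕜 E} {W : U ≃ₗᵢ[𝕜] V} {T : E →ₗ[𝕜] E}

theorem norm_apply (hT : IsBlockSwap W.toLinearEquiv T) (hUV : Codisjoint U V) (hUV' : U ⟂ V)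
    (x : E) : ‖T x‖ = ‖x‖ := by
  obtain ⟨u, v, hu, hv, rfl⟩ := Submodule.codisjoint_iff_exists_add_eq.1 hUV x
  have hTu : T u = W ⟨u, hu⟩ := hT.1 u hu
  have hTv : T v = W.symm ⟨v, hv⟩ := hT.2 v hv
  have hpyth : ‖T (u + v)‖ * ‖T (u + v)‖ = ‖u + v‖ * ‖u + v‖ := by
    rw [map_add, hTu, hTv,
      norm_add_sq_eq_norm_sq_add_norm_sq_of_inner_eq_zero _ _
        (Submodule.isOrtho_iff_inner_eq.1 hUV'.symm _ (W ⟨u, hu⟩).2 _ (W.symm ⟨v, hv⟩).2),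
      norm_add_sq_eq_norm_sq_add_norm_sq_of_inner_eq_zero _ _
        (Submodule.isOrtho_iff_inner_eq.1 hUV' _ hu _ hv)]
    simp only [Submodule.norm_coe, LinearIsometryEquiv.norm_map]
    rfl
  exact (mul_self_inj (norm_nonneg _) (norm_nonneg _)).1 hpyth

theorem isSymmetric (hT : IsBlockSwap W.toLinearEquiv T) (hUV : Codisjoint U V)
    (hUV' : U ⟂ V) : T.IsSymmetric := by
  intro x y
  let T' : E →ₗᵢ[𝕜] E := ⟨T, hT.norm_apply hUV hUV'⟩
  calc ⟪T x, y⟫_𝕜 = ⟪T' x, T' (T y)⟫_𝕜 := by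
        rw [show T' (T y) = y from hT.apply_apply hUV y]; rfl
    _ = ⟪x, T y⟫_𝕜 := T'.inner_map_map x (T y)

end IsBlockSwap

section Commute

variable {R M : Type*} [CommRing R] [AddCommGroup M] [Module R M]

def LinearPMap.CommutesAt (S : M →ₗ.[R] M) (T : M →ₗ[R] M) (x : S.domain) : Prop :=
  ∃ h : T x ∈ S.domain, S ⟨T x, h⟩ = T (S x)

theorem LinearPMap.CommutesAt.add {S : M →ₗ.[R] M} {T : M →ₗ[R] M} {x y : S.domain}
    (hx : S.CommutesAt T x) (hy : S.CommutesAt T y) : S.CommutesAt T (x + y) := by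
  obtain ⟨hxd, hSx⟩ := hx
  obtain ⟨hyd, hSy⟩ := hy
  have hsum : T ↑(x + y) = T x + T y := _root_.map_add T (x : M) y
  refine ⟨hsum ▸ S.domain.add_mem hxd hyd, ?_⟩
  rw [show (⟨T ↑(x + y), _⟩ : S.domain) = ⟨T x, hxd⟩ + ⟨T y, hyd⟩ from Subtype.ext hsum,
    S.map_add, S.map_add, hSx, hSy, _root_.map_add]

variable {U V : Submodule R M}

/-- `S₊ = W⁻¹ S₋ W` for the parts `S₊`, `S₋` of `S` in `U`, `V`, including `W (dom S₊) ⊆ dom S₋`. -/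
def LinearPMap.IntertwinedBy (S : M →ₗ.[R] M) (W : U ≃ₗ[R] V) : Prop :=
  ∀ (x : M) (hx : x ∈ U) (hxd : x ∈ S.domain),
    ∃ hd : ((W ⟨x, hx⟩ : V) : M) ∈ S.domain,
    ∃ hm : (S ⟨((W ⟨x, hx⟩ : V) : M), hd⟩) ∈ V,
      S ⟨x, hxd⟩ = ((W.symm ⟨S ⟨((W ⟨x, hx⟩ : V) : M), hd⟩, hm⟩ : U) : M)

variable {W : U ≃ₗ[R] V} {T : M →ₗ[R] M} {S : M →ₗ.[R] M}

namespace IsBlockSwap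

theorem commutesAt_of_mem_left (hT : IsBlockSwap W T) (hUV : Codisjoint U V)
    (hWS : S.IntertwinedBy W) (x : S.domain) (hx : (x : M) ∈ U) : S.CommutesAt T x := by
  obtain ⟨x, hxd⟩ := x
  obtain ⟨hd, hm, hSx⟩ := hWS x hx hxd
  unfold LinearPMap.CommutesAt
  rw [hT.1 x hx]
  exact ⟨hd, by rw [hSx, ← hT.2 _ hm, hT.apply_apply hUV]⟩

theorem commutesAt_of_mem_right (hT : IsBlockSwap W T) (hUV : Codisjoint U V)
    (hWS : S.IntertwinedBy W)
    (hWonto : ∀ (y : M) (hy : y ∈ V), y ∈ S.domain → ((W.symm ⟨y, hy⟩ : U) : M) ∈ S.domain)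
    (y : S.domain) (hy : (y : M) ∈ V) : S.CommutesAt T y := by
  obtain ⟨y, hyd⟩ := y
  set u := W.symm ⟨y, hy⟩
  have hud : (u : M) ∈ S.domain := hWonto y hy hyd
  have hTu : T u = y := by rw [hT.1 _ u.2]; simp [u]
  obtain ⟨hTud, hSu⟩ := hT.commutesAt_of_mem_left hUV hWS ⟨u, hud⟩ u.2
  have hSy : S ⟨y, hyd⟩ = S ⟨T u, hTud⟩ := congrArg S (Subtype.ext hTu.symm)
  unfold LinearPMap.CommutesAt
  rw [hT.2 y hy]
  exact ⟨hud, by rw [hSy, hSu, hT.apply_apply hUV]⟩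

theorem commutesAt (hT : IsBlockSwap W T) (hUV : Codisjoint U V)
    (hdom : S.domain ≤ S.domain ⊓ U ⊔ S.domain ⊓ V)
    (hWS : S.IntertwinedBy W)
    (hWonto : ∀ (y : M) (hy : y ∈ V), y ∈ S.domain → ((W.symm ⟨y, hy⟩ : U) : M) ∈ S.domain)
    (x : S.domain) : S.CommutesAt T x := by
  obtain ⟨x, hxd⟩ := x
  obtain ⟨u, hu, v, hv, rfl⟩ := Submodule.mem_sup.1 (hdom hxd)
  exact (hT.commutesAt_of_mem_left hUV hWS ⟨u, hu.1⟩ hu.2).add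
    (hT.commutesAt_of_mem_right hUV hWS hWonto ⟨v, hv.1⟩ hv.2)

end IsBlockSwap

end Commute

theorem stmt17_general {H : Type*} [NormedAddCommGroup H] [InnerProductSpace ℂ H] [CompleteSpace H]
    (S : H →ₗ.[ℂ] H)
    (J : H →L[ℂ] H) (hJsa : IsSelfAdjoint J) (hJ2 : J * J = 1)
    (hSJ : ∀ x : S.domain, ∃ h : J x ∈ S.domain, S ⟨J x, h⟩ = J (S x))
    (Hp Hm : Submodule ℂ H)
    (hHp : Hp = LinearMap.ker ((J - 1 : H →L[ℂ] H) : H →ₗ[ℂ] H)) (hHm : Hm = LinearMap.ker ((J + 1 : H →L[ℂ] H) : H →ₗ[ℂ] H))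
    (W : Hp ≃ₗᵢ[ℂ] Hm)
    -- `W` maps `dom S₊` into `dom S₋` and intertwines: `S₊ = W⁻¹ S₋ W`
    (hWS : ∀ (x : H) (hx : x ∈ Hp) (hxd : x ∈ S.domain),
      ∃ hd : ((W ⟨x, hx⟩ : Hm) : H) ∈ S.domain,
      ∃ hm : (S ⟨((W ⟨x, hx⟩ : Hm) : H), hd⟩) ∈ Hm,
        S ⟨x, hxd⟩ = ((W.symm ⟨S ⟨((W ⟨x, hx⟩ : Hm) : H), hd⟩, hm⟩ : Hp) : H))
    -- `W⁻¹` maps `dom S₋` into `dom S₊`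
    (hWonto : ∀ (y : H) (hy : y ∈ Hm), y ∈ S.domain →
      ((W.symm ⟨y, hy⟩ : Hp) : H) ∈ S.domain)
    (R : H →L[ℂ] H)
    (hRp : ∀ (x : H) (hx : x ∈ Hp), R x = ((W ⟨x, hx⟩ : Hm) : H))
    (hRm : ∀ (y : H) (hy : y ∈ Hm), R y = ((W.symm ⟨y, hy⟩ : Hp) : H)) :
    IsSelfAdjoint R ∧ R * R = 1 ∧ J * R = -(R * J) ∧
    ∀ x : S.domain, ∃ h : R x ∈ S.domain, S ⟨R x, h⟩ = R (S x) := by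
  rw [ContinuousLinearMap.toLinearMap_sub, ContinuousLinearMap.toLinearMap_one] at hHp
  rw [ContinuousLinearMap.toLinearMap_add, ContinuousLinearMap.toLinearMap_one] at hHm
  subst hHp hHm
  have hJ : Function.Involutive J := fun x => by simpa using DFunLike.congr_fun hJ2 x
  have hcodisj := Module.End.codisjoint_ker_sub_one_ker_add_one (J := (J : H →ₗ[ℂ] H)) hJ
  have hortho := hJsa.isSymmetric.ker_sub_one_isOrtho_ker_add_one
  have hR : IsBlockSwap W.toLinearEquiv (R : H →ₗ[ℂ] H) := ⟨hRp, hRm⟩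
  have hdom := Module.End.le_inf_ker_sub_one_sup_inf_ker_add_one hJ fun x hx => (hSJ ⟨x, hx⟩).1
  refine ⟨ContinuousLinearMap.isSelfAdjoint_iff_isSymmetric.2 (hR.isSymmetric hcodisj hortho),
    ContinuousLinearMap.ext (hR.apply_apply hcodisj), ContinuousLinearMap.ext fun x => ?_,
    hR.commutesAt hcodisj hdom hWS hWonto⟩
  exact hR.apply_anticomm hcodisj (fun _ => Module.End.mem_ker_sub_one_iff.1)
    (fun _ => Module.End.mem_ker_add_one_iff.1) x

/-- Conversely, if the parts `S₊`, `S₋` of a closed symmetric `S` commuting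
with a self-adjoint involution `J` are unitarily equivalent via `W : H₊ → H₋`
(`S₊ = W⁻¹ S₋ W`), then the blockwise operator `R(x₊, x₋) = (W⁻¹x₋, Wx₊)` is a self-adjoint
involution with `SR = RS` and `JR = -RJ`. -/
theorem stmt17 {H : Type*} [NormedAddCommGroup H] [InnerProductSpace ℂ H] [CompleteSpace H]
    (S : H →ₗ.[ℂ] H) (hdense : Dense (S.domain : Set H))
    (hclosed : IsClosed (S.graph : Set (H × H)))
    (hsym : ∀ x y : S.domain, ⟪(S x : H), (y : H)⟫_ℂ = ⟪(x : H), (S y : H)⟫_ℂ)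
    (J : H →L[ℂ] H) (hJsa : IsSelfAdjoint J) (hJ2 : J * J = 1)
    (hSJ : ∀ x : S.domain, ∃ h : J x ∈ S.domain, S ⟨J x, h⟩ = J (S x))
    (Hp Hm : Submodule ℂ H)
    (hHp : Hp = LinearMap.ker ((J - 1 : H →L[ℂ] H) : H →ₗ[ℂ] H)) (hHm : Hm = LinearMap.ker ((J + 1 : H →L[ℂ] H) : H →ₗ[ℂ] H))
    (W : Hp ≃ₗᵢ[ℂ] Hm)
    -- `W` maps `dom S₊` into `dom S₋` and intertwines: `S₊ = W⁻¹ S₋ W`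
    (hWS : ∀ (x : H) (hx : x ∈ Hp) (hxd : x ∈ S.domain),
      ∃ hd : ((W ⟨x, hx⟩ : Hm) : H) ∈ S.domain,
      ∃ hm : (S ⟨((W ⟨x, hx⟩ : Hm) : H), hd⟩) ∈ Hm,
        S ⟨x, hxd⟩ = ((W.symm ⟨S ⟨((W ⟨x, hx⟩ : Hm) : H), hd⟩, hm⟩ : Hp) : H))
    -- `W⁻¹` maps `dom S₋` into `dom S₊`
    (hWonto : ∀ (y : H) (hy : y ∈ Hm), y ∈ S.domain →
      ((W.symm ⟨y, hy⟩ : Hp) : H) ∈ S.domain)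
    (R : H →L[ℂ] H)
    (hRp : ∀ (x : H) (hx : x ∈ Hp), R x = ((W ⟨x, hx⟩ : Hm) : H))
    (hRm : ∀ (y : H) (hy : y ∈ Hm), R y = ((W.symm ⟨y, hy⟩ : Hp) : H)) :
    IsSelfAdjoint R ∧ R * R = 1 ∧ J * R = -(R * J) ∧
    ∀ x : S.domain, ∃ h : R x ∈ S.domain, S ⟨R x, h⟩ = R (S x) :=
  stmt17_general S J hJsa hJ2 hSJ Hp Hm hHp hHm W hWS hWonto R hRp hRm
end

section
/- Let M₊, M₋ : ℂ₊ → ℂ be two Nevanlinna-type functions with the asymptotics M₊(μ) = i/√μ + O(1/|μ|) and M₋(μ) = -i/√(-μ) + O(1/|μ|) as μ → ∞ in a sector δ < arg μ < π - δ, and Im M_±(i) > 0. Then there exist no real θ₊, θ₋ ∈ (0, π) and positive constants a = |M₋(i)|, b = |M₊(i)| such that M₊(μ)M₋(μ)sin(θ₊ - θ₋) - a M₊(μ) sin θ₊ + b M₋(μ) sin θ₋ = 0 for all μ ∈ ℂ₊. -/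
open Complex Filter Asymptotics

/-- The branch of the square root defined on `ℂ` with a cut along `[0,∞)` fixed by
`Im √λ > 0` off `[0,∞)`: it agrees with the principal square root on the closed upper
half-plane and with its negative on the lower half-plane. -/
noncomputable def sqrtBranch (l : ℂ) : ℂ :=
  if 0 ≤ l.im then l ^ ((1 : ℂ) / 2) else -(l ^ ((1 : ℂ) / 2))

noncomputable def rr (t : ℝ) : ℂ := (Real.exp (Real.log t / 2) : ℂ)
noncomputable def ep : ℂ := Complex.exp ((Real.pi/4 : ℝ) * Complex.I)
noncomputable def eM : ℂ := Complex.exp (-((Real.pi/4 : ℝ) : ℂ) * Complex.I)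

lemma hlog_pos {t : ℝ} (ht : 0 < t) :
    Complex.log ((t:ℂ) * Complex.I) = (Real.log t : ℂ) + ((Real.pi/2 : ℝ) : ℂ) * Complex.I := by
  rw [Complex.log]
  have h1 : ‖(t:ℂ) * Complex.I‖ = t := by
    simp [abs_of_pos ht]
  have h2 : ((t:ℂ) * Complex.I).arg = Real.pi/2 := by
    rw [Complex.arg_real_mul _ ht, Complex.arg_I]
  rw [h1, h2]

lemma cpow_pos_I {t : ℝ} (ht : 0 < t) :
    ((t:ℂ) * Complex.I) ^ ((1:ℂ)/2) = rr t * ep := by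
  have hne : (t:ℂ) * Complex.I ≠ 0 := by
    simp [Complex.ext_iff, ht.ne']
  rw [Complex.cpow_def_of_ne_zero hne, hlog_pos ht]
  rw [add_mul, Complex.exp_add]
  congr 1
  · rw [rr]
    rw [show ((Real.log t : ℂ)) * (1/2) = ((Real.log t / 2 : ℝ) : ℂ) by push_cast; ring]
    rw [← Complex.ofReal_exp]
  · rw [ep]
    congr 1
    push_cast
    ring

lemma hlog_neg {t : ℝ} (ht : 0 < t) :
    Complex.log (-((t:ℂ) * Complex.I)) = (Real.log t : ℂ) - ((Real.pi/2 : ℝ) : ℂ) * Complex.I := by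
  rw [Complex.log]
  have he : -((t:ℂ) * Complex.I) = (t:ℂ) * (-Complex.I) := by ring
  have h1 : ‖-((t:ℂ) * Complex.I)‖ = t := by
    simp [abs_of_pos ht]
  have h2 : (-((t:ℂ) * Complex.I)).arg = -(Real.pi/2) := by
    rw [he, Complex.arg_real_mul _ ht, Complex.arg_neg_I]
  rw [h1, h2]
  push_cast
  ring

lemma cpow_neg_I {t : ℝ} (ht : 0 < t) :
    (-((t:ℂ) * Complex.I)) ^ ((1:ℂ)/2) = rr t * eM := by
  have hne : -((t:ℂ) * Complex.I) ≠ 0 := by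
    simp [Complex.ext_iff, ht.ne']
  rw [Complex.cpow_def_of_ne_zero hne, hlog_neg ht]
  rw [sub_mul, Complex.exp_sub]
  rw [show ((Real.log t : ℂ)) * (1/2) = ((Real.log t / 2 : ℝ) : ℂ) by push_cast; ring]
  rw [← Complex.ofReal_exp]
  rw [div_eq_mul_inv, ← Complex.exp_neg]
  rw [rr, eM]
  congr 2
  push_cast
  ring

lemma ep_eq : ep = Complex.I * eM := by
  have hI : Complex.exp (((Real.pi/2 : ℝ):ℂ) * Complex.I) = Complex.I := by
    rw [Complex.exp_mul_I]; push_cast; simp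
  calc ep = Complex.exp (((Real.pi/2:ℝ):ℂ)*Complex.I + -((Real.pi/4:ℝ):ℂ)*Complex.I) := by
        rw [ep]; congr 1; push_cast; ring
    _ = Complex.I * eM := by rw [Complex.exp_add, hI, eM]

lemma rr_ne {t : ℝ} : rr t ≠ 0 := by
  rw [rr]; exact_mod_cast Real.exp_ne_zero _

lemma em_ne : eM ≠ 0 := Complex.exp_ne_zero _

lemma abs_rr_ep (t : ℝ) : ‖rr t * ep‖ = Real.exp (Real.log t / 2) := by
  rw [rr, ep, norm_mul, Complex.norm_exp, Complex.norm_real, Real.norm_eq_abs]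
  have : (((Real.pi/4 : ℝ) : ℂ) * Complex.I).re = 0 := by simp
  rw [this, Real.exp_zero, abs_of_pos (Real.exp_pos _), mul_one]

lemma sqrtBranch_pos_ray {t : ℝ} (ht : 0 < t) :
    sqrtBranch ((t:ℂ) * Complex.I) = rr t * ep := by
  rw [sqrtBranch, if_pos (by simpa using ht.le), cpow_pos_I ht]

lemma sqrtBranch_neg_ray {t : ℝ} (ht : 0 < t) :
    sqrtBranch (-((t:ℂ) * Complex.I)) = -(rr t * eM) := by
  rw [sqrtBranch, if_neg (by simpa using ht), cpow_neg_I ht]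

lemma hexp_atTop : Filter.Tendsto (fun t : ℝ => Real.exp (Real.log t / 2)) atTop atTop :=
  Real.tendsto_exp_atTop.comp (Real.tendsto_log_atTop.atTop_div_const (by norm_num))

lemma hinv_zero : Filter.Tendsto (fun t : ℝ => (Real.exp (Real.log t / 2))⁻¹) atTop (nhds 0) :=
  Filter.Tendsto.inv_tendsto_atTop hexp_atTop

lemma hSinv_zero : Filter.Tendsto (fun t : ℝ => (rr t * ep)⁻¹) atTop (nhds 0) := by
  apply squeeze_zero_norm (a := fun t => (Real.exp (Real.log t / 2))⁻¹) _ hinv_zero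
  intro t
  rw [norm_inv]
  apply le_of_eq
  congr 1
  exact abs_rr_ep t

lemma htend_ray : Filter.Tendsto (fun t : ℝ => (t:ℂ) * Complex.I) atTop
    ((Filter.comap (fun z : ℂ => ‖z‖) Filter.atTop) ⊓
      Filter.principal {μ : ℂ | Real.pi/4 < μ.arg ∧ μ.arg < Real.pi - Real.pi/4}) := by
  refine tendsto_inf.mpr ⟨tendsto_comap_iff.mpr ?_, tendsto_principal.mpr ?_⟩
  · apply Filter.Tendsto.congr' (f₁ := fun t : ℝ => t)
    · filter_upwards [eventually_gt_atTop 0] with t ht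
      simp [Function.comp, abs_of_pos ht]
    · exact tendsto_id
  · filter_upwards [eventually_gt_atTop 0] with t ht
    have h2 : ((t:ℂ) * Complex.I).arg = Real.pi/2 := by
      rw [Complex.arg_real_mul _ ht, Complex.arg_I]
    have hpi := Real.pi_pos
    exact ⟨by rw [h2]; linarith, by rw [h2]; linarith⟩

lemma key_tendsto {F : ℝ → ℂ}
    (h : F =O[atTop] (fun t : ℝ => 1 / ‖(t:ℂ) * Complex.I‖)) :
    Filter.Tendsto (fun t => (rr t * ep) * F t) atTop (nhds 0) := by
  obtain ⟨C, hCpos, hC⟩ := h.exists_pos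
  apply squeeze_zero_norm' (a := fun t => C * (Real.exp (Real.log t / 2))⁻¹)
  · filter_upwards [hC.bound, eventually_gt_atTop 0] with t hb ht
    have habs : ‖(t:ℂ) * Complex.I‖ = t := by simp [abs_of_pos ht]
    have hsq : Real.exp (Real.log t / 2) * Real.exp (Real.log t / 2) = t := by
      rw [← Real.exp_add, show Real.log t/2 + Real.log t/2 = Real.log t by ring,
        Real.exp_log ht]
    have hE := Real.exp_pos (Real.log t / 2)
    rw [norm_mul]
    have h1 : ‖rr t * ep‖ = Real.exp (Real.log t / 2) := abs_rr_ep t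
    rw [h1]
    calc Real.exp (Real.log t / 2) * ‖F t‖
        ≤ Real.exp (Real.log t / 2) * (C * ‖(1 : ℝ) / ‖(t:ℂ) * Complex.I‖‖) := by
          exact mul_le_mul_of_nonneg_left hb hE.le
      _ = C * (Real.exp (Real.log t / 2))⁻¹ := by
          rw [habs, Real.norm_eq_abs, abs_of_pos (by positivity : (0:ℝ) < 1 / t)]
          have key : ∀ E : ℝ, 0 < E → E * E = t → E * (C * (1/t)) = C * E⁻¹ := by
            intro E hE0 hEt
            rw [← hEt]
            field_simp
          exact key _ hE hsq
  · simpa using tendsto_const_nhds.mul hinv_zero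

/-- If `M₊, M₋` are holomorphic on `ℂ₊` with the sectorial asymptotics
`M₊(μ) = i/√μ + O(1/|μ|)`, `M₋(μ) = -i/√(-μ) + O(1/|μ|)` and `Im M₊(i), Im M₋(i) > 0`,
then there are no `θ₊, θ₋ ∈ (0,π)` and positive `a = |M₋(i)|`, `b = |M₊(i)|` with
`M₊(μ)M₋(μ)sin(θ₊-θ₋) - a M₊(μ) sin θ₊ + b M₋(μ) sin θ₋ = 0` for all `μ ∈ ℂ₊`. -/
theorem stmt18 (Mp Mm : ℂ → ℂ)
    (hMp : DifferentiableOn ℂ Mp {z : ℂ | 0 < z.im})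
    (hMm : DifferentiableOn ℂ Mm {z : ℂ | 0 < z.im})
    (hasymp : ∀ δ : ℝ, 0 < δ → δ < Real.pi / 2 →
      (fun μ : ℂ => Mp μ - Complex.I / sqrtBranch μ) =O[Filter.comap (fun z : ℂ => ‖z‖) Filter.atTop ⊓
        Filter.principal {μ : ℂ | δ < μ.arg ∧ μ.arg < Real.pi - δ}]
        (fun μ : ℂ => 1 / ‖μ‖))
    (hasymm : ∀ δ : ℝ, 0 < δ → δ < Real.pi / 2 →
      (fun μ : ℂ => Mm μ - (-Complex.I) / sqrtBranch (-μ)) =O[Filter.comap (fun z : ℂ => ‖z‖)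
        Filter.atTop ⊓ Filter.principal {μ : ℂ | δ < μ.arg ∧ μ.arg < Real.pi - δ}]
        (fun μ : ℂ => 1 / ‖μ‖))
    (hMpi : 0 < (Mp Complex.I).im) (hMmi : 0 < (Mm Complex.I).im) :
    ¬ ∃ θp θm a b : ℝ, θp ∈ Set.Ioo 0 Real.pi ∧ θm ∈ Set.Ioo 0 Real.pi ∧
      0 < a ∧ 0 < b ∧ a = ‖Mm Complex.I‖ ∧ b = ‖Mp Complex.I‖ ∧
      ∀ μ : ℂ, 0 < μ.im →
        Mp μ * Mm μ * (Real.sin (θp - θm) : ℂ) - (a : ℂ) * Mp μ * (Real.sin θp : ℂ) +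
          (b : ℂ) * Mm μ * (Real.sin θm : ℂ) = 0 := by
  rintro ⟨θp, θm, a, b, hθp, hθm, ha, hb, -, -, hid⟩
  have hpi := Real.pi_pos
  have hsp : 0 < Real.sin θp := Real.sin_pos_of_pos_of_lt_pi hθp.1 hθp.2
  have hsm : 0 < Real.sin θm := Real.sin_pos_of_pos_of_lt_pi hθm.1 hθm.2
  have hOp : (fun t : ℝ => Mp ((t:ℂ)*Complex.I) - Complex.I / sqrtBranch ((t:ℂ)*Complex.I))
      =O[atTop] (fun t : ℝ => 1 / ‖(t:ℂ)*Complex.I‖) :=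
    (hasymp (Real.pi/4) (by linarith) (by linarith)).comp_tendsto htend_ray
  have hOm : (fun t : ℝ => Mm ((t:ℂ)*Complex.I) - (-Complex.I) / sqrtBranch (-((t:ℂ)*Complex.I)))
      =O[atTop] (fun t : ℝ => 1 / ‖(t:ℂ)*Complex.I‖) :=
    (hasymm (Real.pi/4) (by linarith) (by linarith)).comp_tendsto htend_ray
  have h0p := key_tendsto hOp
  have h0m := key_tendsto hOm
  have hSne : ∀ t : ℝ, rr t * ep ≠ 0 := fun t => mul_ne_zero rr_ne (Complex.exp_ne_zero _)
  have hSp : Filter.Tendsto (fun t : ℝ => (rr t * ep) * Mp ((t:ℂ)*Complex.I)) atTop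
      (nhds Complex.I) := by
    have h := h0p.add (tendsto_const_nhds (x := Complex.I))
    rw [zero_add] at h
    refine h.congr' ?_
    filter_upwards [eventually_gt_atTop 0] with t ht
    rw [sqrtBranch_pos_ray ht]
    rw [mul_sub, mul_div_assoc', mul_comm (rr t * ep) Complex.I, mul_div_assoc, div_self (hSne t),
      mul_one]
    ring
  have hSm : Filter.Tendsto (fun t : ℝ => (rr t * ep) * Mm ((t:ℂ)*Complex.I)) atTop
      (nhds (-1)) := by
    have h := h0m.add (tendsto_const_nhds (x := (-1 : ℂ)))
    rw [zero_add] at h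
    refine h.congr' ?_
    filter_upwards [eventually_gt_atTop 0] with t ht
    rw [sqrtBranch_neg_ray ht]
    have hc : (rr t * ep) * ((-Complex.I) / (-(rr t * eM))) = -1 := by
      rw [neg_div_neg_eq, ep_eq]
      have h1 : rr t * eM ≠ 0 := mul_ne_zero rr_ne em_ne
      rw [mul_div_assoc', show rr t * (Complex.I * eM) * Complex.I
        = (Complex.I * Complex.I) * (rr t * eM) by ring, mul_div_assoc, div_self h1,
        Complex.I_mul_I, mul_one]
    linear_combination (-1 : ℂ) * hc
  have h4 : Filter.Tendsto (fun t : ℝ => Mm ((t:ℂ)*Complex.I)) atTop (nhds 0) := by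
    have h := hSinv_zero.mul hSm
    rw [zero_mul] at h
    refine h.congr fun t => ?_
    rw [inv_mul_cancel_left₀ (hSne t)]
  have hL : Filter.Tendsto (fun t : ℝ =>
      ((Real.sin (θp - θm) : ℂ)) * ((rr t * ep) * Mp ((t:ℂ)*Complex.I)) * Mm ((t:ℂ)*Complex.I)
        - (a:ℂ) * ((rr t * ep) * Mp ((t:ℂ)*Complex.I)) * (Real.sin θp : ℂ)
        + (b:ℂ) * ((rr t * ep) * Mm ((t:ℂ)*Complex.I)) * (Real.sin θm : ℂ)) atTop
      (nhds ((Real.sin (θp - θm) : ℂ) * Complex.I * 0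
        - (a:ℂ) * Complex.I * (Real.sin θp : ℂ) + (b:ℂ) * (-1) * (Real.sin θm : ℂ))) :=
    (((tendsto_const_nhds.mul hSp).mul h4).sub
      ((tendsto_const_nhds.mul hSp).mul tendsto_const_nhds)).add
      ((tendsto_const_nhds.mul hSm).mul tendsto_const_nhds)
  have hz : (fun t : ℝ =>
      ((Real.sin (θp - θm) : ℂ)) * ((rr t * ep) * Mp ((t:ℂ)*Complex.I)) * Mm ((t:ℂ)*Complex.I)
        - (a:ℂ) * ((rr t * ep) * Mp ((t:ℂ)*Complex.I)) * (Real.sin θp : ℂ)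
        + (b:ℂ) * ((rr t * ep) * Mm ((t:ℂ)*Complex.I)) * (Real.sin θm : ℂ))
      =ᶠ[atTop] (fun _ => (0:ℂ)) := by
    filter_upwards [eventually_gt_atTop 0] with t ht
    have him : (0:ℝ) < ((t:ℂ)*Complex.I).im := by simpa using ht
    have hident := hid _ him
    linear_combination (rr t * ep) * hident
  have hzero : (Real.sin (θp - θm) : ℂ) * Complex.I * 0
        - (a:ℂ) * Complex.I * (Real.sin θp : ℂ) + (b:ℂ) * (-1) * (Real.sin θm : ℂ) = 0 :=
    tendsto_nhds_unique (hL.congr' hz) tendsto_const_nhds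
  rw [Complex.ext_iff] at hzero
  obtain ⟨hre, -⟩ := hzero
  simp only [Complex.mul_re, Complex.sub_re, Complex.add_re, Complex.ofReal_re,
    Complex.ofReal_im, Complex.I_re, Complex.I_im, Complex.zero_re, Complex.zero_im,
    Complex.mul_im, Complex.neg_re, Complex.neg_im, Complex.one_re, Complex.one_im] at hre
  have hpos : (0:ℝ) < b * Real.sin θm := mul_pos hb hsm
  nlinarith [hre, hpos]
end
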